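/- arXiv:1402.6574 — 2 statements merged into one kernel-verified Lean document; each statement's English description precedes it below -/
import Mathlib

section
/- The power divergence family d_λ(p,q) = (1/(λ(λ+1)))·Σ_i (p_i^{λ+1}/q_i^λ − p_i) converges, as λ → 0, to the Kullback-Leibler divergence Σ_i p_i·log(p_i/q_i), for strictly positive vectors p, q with equal total mass. -/
/-!
Writing `p^(λ+1) q^(-λ) = p (p/q)^λ`, each summand of `λ (λ + 1) d_λ(p, q)` is
`f(λ) - f(0)` for `f(λ) = p (p/q)^λ`, whose derivative at `0` is `p log (p/q)`.
So `d_λ` is `1/(λ + 1)` times a sum of difference quotients at `0`, and the limit is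
`Σ p log (p/q)`.
-/

open Filter Topology

namespace Real

theorem rpow_add_one_mul_rpow_neg {a b : ℝ} (ha : 0 < a) (hb : 0 ≤ b) (l : ℝ) :
    a ^ (l + 1) * b ^ (-l) = a * (a / b) ^ l := by
  rw [rpow_add_one ha.ne', rpow_neg hb, div_rpow ha.le hb]
  ring

theorem hasDerivAt_rpow_add_one_mul_rpow_neg {a b : ℝ} (ha : 0 < a) (hb : 0 < b) :
    HasDerivAt (fun l : ℝ => a ^ (l + 1) * b ^ (-l)) (a * log (a / b)) 0 := by
  have h := ((hasStrictDerivAt_const_rpow (div_pos ha hb) 0).hasDerivAt).const_mul a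
  rw [rpow_zero, one_mul] at h
  exact h.congr_of_eventuallyEq
    (Eventually.of_forall fun l => rpow_add_one_mul_rpow_neg ha hb.le l)

theorem tendsto_rpow_add_one_mul_rpow_neg_sub_div {a b : ℝ} (ha : 0 < a) (hb : 0 < b) :
    Tendsto (fun l : ℝ => (a ^ (l + 1) * b ^ (-l) - a) / l) (𝓝[≠] 0)
      (𝓝 (a * log (a / b))) := by
  refine (hasDerivAt_iff_tendsto_slope.mp
    (hasDerivAt_rpow_add_one_mul_rpow_neg ha hb)).congr fun l => ?_
  simp [slope_def_field]

end Real

theorem power_divergence_tendsto_kullback_general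
    {ι : Type*} [Fintype ι]
    (p q : ι → ℝ) (hp : ∀ i, 0 < p i) (hq : ∀ i, 0 < q i) :
    Tendsto (fun l : ℝ =>
        (1 / (l * (l + 1))) * ∑ i, (p i ^ (l + 1) * q i ^ (-l) - p i))
      (𝓝[({0, -1} : Set ℝ)ᶜ] 0)
      (𝓝 (∑ i, p i * Real.log (p i / q i))) := by
  have h_inv : Tendsto (fun l : ℝ => 1 / (l + 1)) (𝓝 0) (𝓝 1) := by
    have h := (tendsto_id (x := 𝓝 (0 : ℝ))).add_const 1
    simpa using h.inv₀ (by norm_num)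
  have h_quot : Tendsto (fun l : ℝ => ∑ i, (p i ^ (l + 1) * q i ^ (-l) - p i) / l) (𝓝[≠] 0)
      (𝓝 (∑ i, p i * Real.log (p i / q i))) :=
    tendsto_finsetSum _ fun i _ => Real.tendsto_rpow_add_one_mul_rpow_neg_sub_div (hp i) (hq i)
  have h_filter : 𝓝[({0, -1} : Set ℝ)ᶜ] (0 : ℝ) ≤ 𝓝[≠] 0 :=
    nhdsWithin_mono _ fun l hl h0 => hl (Or.inl h0)
  have h := (h_inv.mono_left nhdsWithin_le_nhds).mul (h_quot.mono_left h_filter)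
  rw [one_mul] at h
  refine h.congr fun l => ?_
  rw [← Finset.sum_div, one_div, one_div, mul_inv]
  ring

theorem power_divergence_tendsto_kullback
    {ι : Type*} [Fintype ι]
    (p q : ι → ℝ) (hp : ∀ i, 0 < p i) (hq : ∀ i, 0 < q i)
    (hmass : ∑ i, p i = ∑ i, q i) :
    Tendsto (fun l : ℝ =>
        (1 / (l * (l + 1))) * ∑ i, (p i ^ (l + 1) * q i ^ (-l) - p i))
      (𝓝[({0, -1} : Set ℝ)ᶜ] 0)
      (𝓝 (∑ i, p i * Real.log (p i / q i))) :=
  power_divergence_tendsto_kullback_general p q hp hq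
end

section
/- The power divergence family d_λ(p,q) = (1/(λ(λ+1)))·Σ_i (p_i^{λ+1}/q_i^λ − p_i) converges, as λ → −1, to the reversed Kullback-Leibler divergence Σ_i q_i·log(q_i/p_i), for strictly positive vectors p, q with equal total mass. -/
open Filter Topology

/-
The numerator `g λ = ∑ i, (p i ^ (λ + 1) * q i ^ (-λ) - p i)` vanishes at `λ = -1` because `p`
and `q` have equal mass, so `g λ / (λ + 1)` tends to `g' (-1) = -∑ i, q i * log (q i / p i)`,
and the remaining factor `1 / λ` tends to `-1`.
-/

theorem hasDerivAt_rpow_add_one_mul_rpow_neg {a b : ℝ} (ha : 0 < a) (hb : 0 < b) (x : ℝ) :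
    HasDerivAt (fun l : ℝ => a ^ (l + 1) * b ^ (-l))
      (a ^ (x + 1) * b ^ (-x) * Real.log (a / b)) x := by
  have hpow_a := ((hasDerivAt_id x).add_const 1).const_rpow ha
  have hpow_b := (hasDerivAt_id x).neg.const_rpow hb
  refine (hpow_a.mul hpow_b).congr_deriv ?_
  rw [Real.log_div ha.ne' hb.ne']
  simp only [id, Pi.neg_apply]
  ring

theorem tendsto_div_sub_nhdsNE_of_hasDerivAt {g : ℝ → ℝ} {g' x : ℝ} (hg : HasDerivAt g g' x)
    (hx : g x = 0) : Tendsto (fun l => g l / (l - x)) (𝓝[≠] x) (𝓝 g') :=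
  (hasDerivAt_iff_tendsto_slope.mp hg).congr fun l => by rw [slope_def_field, hx, sub_zero]

section PowerDivergence

variable {ι : Type*} [Fintype ι] {p q : ι → ℝ}

theorem sum_rpow_add_one_mul_rpow_neg_sub_eq_zero_at_neg_one (hmass : ∑ i, p i = ∑ i, q i) :
    ∑ i, (p i ^ ((-1 : ℝ) + 1) * q i ^ (-(-1 : ℝ)) - p i) = 0 := by
  simp only [neg_add_cancel, neg_neg, Real.rpow_zero, Real.rpow_one, one_mul]
  rw [Finset.sum_sub_distrib, hmass, sub_self]

theorem hasDerivAt_sum_rpow_add_one_mul_rpow_neg_sub_at_neg_one (hp : ∀ i, 0 < p i)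
    (hq : ∀ i, 0 < q i) :
    HasDerivAt (fun l : ℝ => ∑ i, (p i ^ (l + 1) * q i ^ (-l) - p i))
      (-∑ i, q i * Real.log (q i / p i)) (-1) := by
  rw [← Finset.sum_neg_distrib]
  refine HasDerivAt.fun_sum fun i _ => ?_
  convert ((hasDerivAt_rpow_add_one_mul_rpow_neg (hp i) (hq i) (-1)).sub_const (p i))
    using 1
  rw [neg_add_cancel, neg_neg, Real.rpow_zero, Real.rpow_one, one_mul, ← inv_div (q i) (p i),
    Real.log_inv]
  ring

end PowerDivergence

theorem power_divergence_tendsto_reversed_kullback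
    {ι : Type*} [Fintype ι]
    (p q : ι → ℝ) (hp : ∀ i, 0 < p i) (hq : ∀ i, 0 < q i)
    (hmass : ∑ i, p i = ∑ i, q i) :
    Tendsto (fun l : ℝ =>
        (1 / (l * (l + 1))) * ∑ i, (p i ^ (l + 1) * q i ^ (-l) - p i))
      (𝓝[({0, -1} : Set ℝ)ᶜ] (-1))
      (𝓝 (∑ i, q i * Real.log (q i / p i))) := by
  have hquotient := tendsto_div_sub_nhdsNE_of_hasDerivAt
    (hasDerivAt_sum_rpow_add_one_mul_rpow_neg_sub_at_neg_one hp hq)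
    (sum_rpow_add_one_mul_rpow_neg_sub_eq_zero_at_neg_one hmass)
  have hinv : Tendsto (fun l : ℝ => l⁻¹) (𝓝[≠] (-1)) (𝓝 (-1)) := by
    simpa using (tendsto_inv₀ (by norm_num : (-1 : ℝ) ≠ 0)).mono_left nhdsWithin_le_nhds
  have hfilter : 𝓝[({0, -1} : Set ℝ)ᶜ] (-1) ≤ 𝓝[≠] (-1) :=
    nhdsWithin_mono _ (Set.compl_subset_compl.mpr (Set.subset_insert _ _))
  convert (hinv.mul hquotient).mono_left hfilter using 2 with l
  · rw [sub_neg_eq_add, one_div, mul_inv]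
    ring
  · ring
end
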